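/- arXiv:1605.03529 — 6 statements merged into one kernel-verified Lean document; each statement's English description precedes it below -/
import Mathlib

section
/- For any real polynomial s of degree at most k and real numbers 0 < μ < L, the maximum over η in [μ, L] of |s(η)·η + 1| is at least ((√κ - 1)/(√κ + 1))^(k+1), where κ = L/μ. -/
/-!
Map `[μ, L]` affinely onto `[-1, 1]`; this sends `0` to `c = (κ + 1) / (κ - 1) ≥ 1`, and with
`ρ = (√κ - 1) / (√κ + 1)` one has `c = (ρ + ρ⁻¹) / 2`. By the extremal property of Chebyshev
polynomials, a polynomial of degree at most `n` bounded by `M` on `[-1, 1]` is at most `M T_n(c)`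
at `c`, and `T_n(c) = (ρⁿ + ρ⁻ⁿ) / 2 < ρ⁻ⁿ`. Since `η ↦ s(η) η + 1` takes the value `1` at `0`,
its bound `M` on `[μ, L]` satisfies `1 ≤ M T_{k+1}(c) < M ρ^{-(k+1)}`.
-/

open Real Set Polynomial Chebyshev

lemma eval_T_real_half_add_inv (n : ℕ) {x : ℝ} (hx : 0 < x) :
    (T ℝ n).eval ((x + x⁻¹) / 2) = (x ^ n + (x ^ n)⁻¹) / 2 := by
  have hcosh : (x + x⁻¹) / 2 = cosh (log x) := by
    rw [cosh_eq, exp_neg, exp_log hx]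
  rw [hcosh, T_real_cosh, cosh_eq, Int.cast_natCast, exp_neg, exp_nat_mul, exp_log hx]

lemma eval_le_mul_eval_T_of_forall_abs_le {n : ℕ} {P : ℝ[X]} (hP : P.natDegree ≤ n)
    {a b M : ℝ} (hab : a < b) (hM : 0 < M) (hbound : ∀ x ∈ Icc a b, |P.eval x| ≤ M)
    {x : ℝ} (hx : x ≤ a) :
    P.eval x ≤ M * (T ℝ n).eval ((a + b - 2 * x) / (b - a)) := by
  set φ : ℝ[X] := Polynomial.C ((a + b) / 2) - Polynomial.C ((b - a) / 2) * X
  have hφ (y : ℝ) : φ.eval y = ((a + b) - (b - a) * y) / 2 := by simp [φ]; ring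
  set Q := Polynomial.C M⁻¹ * P.comp φ
  have hQdeg : Q.degree ≤ n := by
    refine degree_le_of_natDegree_le ((natDegree_C_mul_le _ _).trans ?_)
    refine natDegree_comp_le.trans ?_
    have hφdeg : φ.natDegree ≤ 1 := by simp only [φ]; compute_degree
    simpa using Nat.mul_le_mul hP hφdeg
  have hQbound : ∀ y ∈ Icc (-1 : ℝ) 1, |Q.eval y| ≤ 1 := by
    rintro y ⟨hy₁, hy₂⟩
    have hmem : φ.eval y ∈ Icc a b := by
      rw [hφ]; constructor <;> nlinarith
    simpa [Q, abs_mul, abs_of_pos hM, inv_mul_le_one₀ hM] using hbound _ hmem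
  have hy : 1 ≤ (a + b - 2 * x) / (b - a) := by
    rw [one_le_div (by linarith)]; linarith
  have hQT := eval_iterate_derivative_le_of_forall_abs_le_one (k := 0) hy hQdeg hQbound
  simp only [Function.iterate_zero, id, Q, eval_mul, eval_C, eval_comp, hφ] at hQT
  have hφx : ((a + b) - (b - a) * ((a + b - 2 * x) / (b - a))) / 2 = x := by
    field_simp [(sub_pos.2 hab).ne']; ring
  rwa [hφx, inv_mul_le_iff₀ hM] at hQT

theorem stmt_0 (k : ℕ) (s : Polynomial ℝ) (hs : s.natDegree ≤ k)
    (μ L : ℝ) (hμ : 0 < μ) (hμL : μ < L) :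
    ∃ η ∈ Set.Icc μ L,
      |s.eval η * η + 1| ≥ ((Real.sqrt (L / μ) - 1) / (Real.sqrt (L / μ) + 1)) ^ (k + 1) := by
  set a := √(L / μ)
  set ρ := (a - 1) / (a + 1)
  have ha : 1 < a := by
    rw [Real.lt_sqrt zero_le_one, one_pow, one_lt_div hμ]; exact hμL
  have hρ₀ : 0 < ρ := div_pos (by linarith) (by linarith)
  have hρ₁ : ρ < 1 := (div_lt_one (by linarith)).2 (by linarith)
  have hL : L = a ^ 2 * μ := by
    rw [Real.sq_sqrt (div_pos (hμ.trans hμL) hμ).le, div_mul_cancel₀ _ hμ.ne']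
  have hc : (μ + L) / (L - μ) = (ρ + ρ⁻¹) / 2 := by
    simp only [ρ, inv_div, hL]
    field_simp [(by nlinarith : a ^ 2 - 1 ≠ 0), (by linarith : a - 1 ≠ 0), hμ.ne']
    ring
  by_contra! h
  have hdeg : (s * X + 1).natDegree ≤ k + 1 := by compute_degree; omega
  have key := eval_le_mul_eval_T_of_forall_abs_le hdeg hμL (pow_pos hρ₀ (k + 1))
    (fun η hη => by simpa using (h η hη).le) hμ.le
  simp only [eval_add, eval_mul, eval_X, eval_one, mul_zero, zero_add, sub_zero] at key
  rw [hc, eval_T_real_half_add_inv _ hρ₀] at key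
  have hr₀ : 0 < ρ ^ (k + 1) := pow_pos hρ₀ _
  have hr₁ : ρ ^ (k + 1) < 1 := pow_lt_one₀ hρ₀.le hρ₁ (Nat.succ_ne_zero k)
  have := mul_inv_cancel₀ hr₀.ne'
  nlinarith
end

section
/- For any real polynomial s of degree at most k and any L > 0, the maximum over η in [0, L] of η·(s(η)·η + 1)^2 is at least L/(2k+3)^2. -/
/-!
With `η = L x²` and `q(x) = x (s(η) η + 1)`, `q` is a polynomial of degree at most the odd
number `N = 2k + 3` with `q(0) = 0`, `q'(0) = 1` and `L q(x)² = η (s(η) η + 1)²`. So it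
suffices that `|q'(0)| ≤ N max_{[-1,1]} |q|`, a Bernstein inequality at the origin, with `T_N` extremal.
If instead `|q| < |a|` on `[-1,1]`, where `a T_N'(0) = q'(0)`, then `F = a T_N - q` alternates in
sign on the `N + 1` extremal nodes of `T_N`, so it has a zero between consecutive nodes. All but
the middle one are nonzero, and `0` is a double zero of `F`: that is `N + 1` zeros for a nonzero
polynomial of degree at most `N`.
-/

open Polynomial Real

theorem exists_strictAntiOn_zeros_of_alternating {f : ℝ → ℝ} (hf : Continuous f) {x : ℕ → ℝ}
    {n : ℕ} (hx : StrictAntiOn x (Set.Iic n)) {a : ℝ}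
    (hsign : ∀ j ≤ n, 0 < a * (-1) ^ j * f (x j)) :
    ∃ z : ℕ → ℝ, StrictAntiOn z (Set.Iio n) ∧
      ∀ j < n, z j ∈ Set.Ioo (x (j + 1)) (x j) ∧ f (z j) = 0 := by
  have hzero : ∀ j < n, ∃ z ∈ Set.Ioo (x (j + 1)) (x j), f z = 0 := by
    intro j hj
    have hlt : x (j + 1) < x j := hx (Set.mem_Iic.2 hj.le) (Set.mem_Iic.2 hj) (Nat.lt_succ_self j)
    have hprod : f (x j) * f (x (j + 1)) < 0 := by
      have h := mul_pos (hsign j hj.le) (hsign (j + 1) hj)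
      have e : a * (-1) ^ j * f (x j) * (a * (-1) ^ (j + 1) * f (x (j + 1)))
          = -(a * (-1) ^ j) ^ 2 * (f (x j) * f (x (j + 1))) := by ring
      rw [e] at h
      nlinarith [sq_nonneg (a * (-1) ^ j)]
    rcases mul_neg_iff.1 hprod with h | h
    · exact intermediate_value_Ioo hlt.le hf.continuousOn ⟨h.2, h.1⟩
    · exact intermediate_value_Ioo' hlt.le hf.continuousOn ⟨h.1, h.2⟩
  choose! z hz using hzero
  refine ⟨z, fun i hi j hj hij => ?_, fun j hj => hz j hj⟩
  have hjn : j < n := hj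
  calc z j < x j := (hz j hjn).1.2
    _ ≤ x (i + 1) := hx.antitoneOn (Set.mem_Iic.2 (by omega)) (Set.mem_Iic.2 hjn.le) hij
    _ < z i := (hz i hi).1.1

namespace Polynomial

theorem X_sq_dvd_of_eval_zero_of_derivative_eval_zero {R : Type*} [CommRing R] {p : R[X]}
    (h₀ : p.eval 0 = 0) (h₁ : (derivative p).eval 0 = 0) : X ^ 2 ∣ p := by
  rw [X_pow_dvd_iff]
  intro d hd
  interval_cases d
  · rwa [coeff_zero_eq_eval_zero]
  · simpa [← coeff_zero_eq_eval_zero, coeff_derivative] using h₁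

theorem eq_zero_of_X_sq_dvd_of_eval_eq_zero {R : Type*} [CommRing R] [IsDomain R] {p : R[X]}
    (hdvd : X ^ 2 ∣ p) (s : Finset R) (hs : ∀ z ∈ s, z ≠ 0 ∧ p.eval z = 0)
    (hcard : p.natDegree < s.card + 2) : p = 0 := by
  obtain ⟨g, rfl⟩ := hdvd
  by_cases hg : g = 0
  · rw [hg, mul_zero]
  rw [natDegree_mul (pow_ne_zero 2 X_ne_zero) hg, natDegree_X_pow] at hcard
  refine absurd (eq_zero_of_natDegree_lt_card_of_eval_eq_zero' g s (fun z hz => ?_) (by omega)) hg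
  simpa [(hs z hz).1] using (hs z hz).2

end Polynomial

namespace Polynomial.Chebyshev

theorem node_pos {n i : ℕ} (hi : 2 * i < n) : 0 < node n i := by
  have hn : (0 : ℝ) < n := by exact_mod_cast (by omega : 0 < n)
  have hi' : (2 * i : ℝ) < n := by exact_mod_cast hi
  apply cos_pos_of_mem_Ioo
  constructor
  · have : 0 ≤ (i : ℝ) * π / n := by positivity
    linarith [pi_pos]
  · rw [div_lt_iff₀ hn]
    nlinarith [pi_pos]

theorem node_neg {n i : ℕ} (hi : n < 2 * i) (hin : i ≤ n) : node n i < 0 := by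
  have hn : (0 : ℝ) < n := by exact_mod_cast (by omega : 0 < n)
  have hi' : (n : ℝ) < 2 * i := by exact_mod_cast hi
  have hin' : (i : ℝ) ≤ n := by exact_mod_cast hin
  apply cos_neg_of_pi_div_two_lt_of_lt
  · rw [lt_div_iff₀ hn]
    nlinarith [pi_pos]
  · rw [div_lt_iff₀ hn]
    nlinarith [pi_pos]

theorem strictAntiOn_node_Iic (n : ℕ) : StrictAntiOn (node n) (Set.Iic n) :=
  fun _ _ _ hj hij => node_lt hj hij

theorem mul_eval_C_mul_T_sub_node_pos {n j : ℕ} (hj : j ≤ n) {a : ℝ} {q : ℝ[X]}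
    (hq : |q.eval (node n j)| < |a|) :
    0 < a * (-1) ^ j * (Polynomial.C a * T ℝ n - q).eval (node n j) := by
  have hsq : ((-1 : ℝ) ^ j) ^ 2 = 1 := by simp [← pow_mul']
  have e : a * (-1) ^ j * (Polynomial.C a * T ℝ n - q).eval (node n j)
      = a ^ 2 - a * (-1) ^ j * q.eval (node n j) := by
    simp only [eval_sub, eval_mul, eval_C, eval_T_real_node (Finset.mem_Iic.2 hj)]
    linear_combination a ^ 2 * hsq
  have hle := le_abs_self (a * (-1) ^ j * q.eval (node n j))
  rw [abs_mul, abs_mul, abs_neg_one_pow, mul_one] at hle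
  rw [e]
  nlinarith [mul_lt_mul_of_pos_left hq ((abs_nonneg _).trans_lt hq), abs_mul_abs_self a]

theorem X_sq_dvd_C_mul_T_sub (m : ℕ) {q : ℝ[X]} (hq : q.eval 0 = 0) :
    X ^ 2 ∣ Polynomial.C ((derivative q).eval 0 * (-1) ^ m / (2 * m + 1)) *
      T ℝ (2 * m + 1 : ℕ) - q := by
  apply X_sq_dvd_of_eval_zero_of_derivative_eval_zero
  · simp [hq, T_eval_zero_of_odd ℝ (odd_two_mul_add_one (m : ℤ))]
  · have hT : (derivative (T ℝ (2 * m + 1 : ℕ))).eval 0 = (2 * m + 1) * (-1) ^ m := by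
      simp [T_derivative_eq_U]
    rw [derivative_sub, derivative_C_mul, eval_sub, eval_mul, eval_C, hT]
    field_simp
    simp [← pow_mul']

end Polynomial.Chebyshev

open Polynomial.Chebyshev in
theorem Polynomial.exists_abs_derivative_eval_zero_le {m : ℕ} {q : ℝ[X]}
    (hdeg : q.natDegree ≤ 2 * m + 1) (hq : q.eval 0 = 0) :
    ∃ x ∈ Set.Icc (-1 : ℝ) 1, |(derivative q).eval 0| ≤ (2 * m + 1) * |q.eval x| := by
  by_contra! hsmall
  set N := 2 * m + 1
  set a : ℝ := (derivative q).eval 0 * (-1) ^ m / (2 * m + 1)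
  set F : ℝ[X] := C a * T ℝ N - q
  have hsign : ∀ j ≤ N, 0 < a * (-1) ^ j * F.eval (node N j) := by
    refine fun j hj => mul_eval_C_mul_T_sub_node_pos hj ?_
    have hNpos : (0 : ℝ) < 2 * m + 1 := by positivity
    rw [abs_div, abs_mul, abs_of_pos hNpos, lt_div_iff₀ hNpos]
    simpa [abs_mul, mul_comm] using hsmall _ (node_mem_Icc (n := N) (i := j))
  obtain ⟨z, hz_anti, hz⟩ :=
    exists_strictAntiOn_zeros_of_alternating F.continuous (strictAntiOn_node_Iic N) hsign
  have hnode : AntitoneOn (node N) (Set.Iic N) := (strictAntiOn_node_Iic N).antitoneOn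
  have hroots : ∀ w ∈ ((Finset.range N).erase m).image z, w ≠ 0 ∧ F.eval w = 0 := by
    intro w hw
    obtain ⟨j, hj, rfl⟩ := Finset.mem_image.1 hw
    obtain ⟨hjm, hjN⟩ := Finset.mem_erase.1 hj
    rw [Finset.mem_range] at hjN
    refine ⟨?_, (hz j hjN).2⟩
    rcases lt_or_gt_of_ne hjm with hjm | hjm
    · have h : node N m ≤ node N (j + 1) :=
        hnode (Set.mem_Iic.2 hjN) (Set.mem_Iic.2 (by omega)) hjm
      exact ((node_pos (by omega)).trans_le h |>.trans (hz j hjN).1.1).ne'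
    · have h : node N j ≤ node N (m + 1) :=
        hnode (Set.mem_Iic.2 (by omega)) (Set.mem_Iic.2 hjN.le) hjm
      exact ((hz j hjN).1.2.trans_le h |>.trans (node_neg (by omega) (by omega))).ne
  have hdegF : F.natDegree ≤ N := by
    refine (natDegree_sub_le _ _).trans (max_le ((natDegree_C_mul_le _ _).trans ?_) hdeg)
    rw [natDegree_T]
    omega
  have hcard : (((Finset.range N).erase m).image z).card = N - 1 := by
    rw [Finset.card_image_of_injOn (hz_anti.injOn.mono fun j hj => ?_),
      Finset.card_erase_of_mem (Finset.mem_range.2 (by omega)), Finset.card_range]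
    simpa using (Finset.mem_erase.1 hj).2
  have hF : F = 0 :=
    eq_zero_of_X_sq_dvd_of_eval_eq_zero (X_sq_dvd_C_mul_T_sub m hq) _ hroots (by omega)
  simpa [hF] using hsign 0 (Nat.zero_le _)

theorem stmt_1 (k : ℕ) (s : Polynomial ℝ) (hs : s.natDegree ≤ k) (L : ℝ) (hL : 0 < L) :
    ∃ η ∈ Set.Icc (0 : ℝ) L,
      η * (s.eval η * η + 1) ^ 2 ≥ L / (2 * (k : ℝ) + 3) ^ 2 := by
  set q : ℝ[X] := X * (s * X + 1).comp (C L * X ^ 2)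
  have hq : ∀ x, q.eval x = x * (s.eval (L * x ^ 2) * (L * x ^ 2) + 1) := by simp [q]
  have hdeg : q.natDegree ≤ 2 * (k + 1) + 1 := by
    have hp : (s * X + 1).natDegree ≤ k + 1 :=
      (natDegree_add_le _ _).trans (max_le (natDegree_mul_le.trans (by simp [hs])) (by simp))
    calc q.natDegree ≤ 1 + (s * X + 1).natDegree * (C L * X ^ 2).natDegree :=
          natDegree_mul_le.trans (add_le_add natDegree_X_le natDegree_comp_le)
      _ ≤ 1 + (k + 1) * 2 := by gcongr; exact natDegree_C_mul_X_pow_le L 2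
      _ = 2 * (k + 1) + 1 := by ring
  obtain ⟨x, hx, hbound⟩ := exists_abs_derivative_eval_zero_le hdeg (by simp [hq])
  have hderiv : (derivative q).eval 0 = 1 := by simp [q]
  rw [hderiv, abs_one] at hbound
  have hsq : 1 ≤ (2 * (k : ℝ) + 3) ^ 2 * q.eval x ^ 2 := by
    rw [← sq_abs (q.eval x), ← mul_pow]
    exact one_le_pow₀ (by push_cast at hbound; linarith)
  have hx2 : x ^ 2 ≤ 1 := sq_le_one_iff_abs_le_one x |>.2 (abs_le.2 hx)
  refine ⟨L * x ^ 2, ⟨by positivity, by nlinarith⟩, ?_⟩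
  calc L / (2 * (k : ℝ) + 3) ^ 2 ≤ L * q.eval x ^ 2 := by
        rw [div_le_iff₀ (by positivity)]
        nlinarith
    _ = L * x ^ 2 * (s.eval (L * x ^ 2) * (L * x ^ 2) + 1) ^ 2 := by rw [hq]; ring
end

section
/- Let s be a real polynomial of degree at most k and L > 0. If there exists ε > 0 such that |s(η)·η + 1| ≤ (1 - η/L)^(k+1) for all η in (L - ε, L), then s(η)·η + 1 = (1 - η/L)^(k+1) identically. -/
open Polynomial Filter Set Topology

lemma key (n : ℕ) : ∀ (d : Polynomial ℝ) (C L ε : ℝ), 0 < ε →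
    (∀ η ∈ Set.Ioo (L - ε) L, |d.eval η| ≤ C * (L - η) ^ n) →
    (X - Polynomial.C L) ^ n ∣ d := by
  induction n with
  | zero => intro d C L ε hε hb; simp
  | succ n ih =>
    intro d C L ε hε hb
    have hroot : d.eval L = 0 := by
      have h1 : Tendsto (fun η => |d.eval η|) (𝓝[<] L) (𝓝 |d.eval L|) :=
        ((d.continuous.abs.tendsto L).mono_left nhdsWithin_le_nhds)
      have h2 : Tendsto (fun η => C * (L - η) ^ (n + 1)) (𝓝[<] L) (𝓝 0) := by
        have : Tendsto (fun η : ℝ => C * (L - η) ^ (n + 1)) (𝓝 L) (𝓝 (C * (L - L) ^ (n + 1))) := by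
          exact (Continuous.mul continuous_const ((continuous_const.sub continuous_id).pow _)).tendsto L
        simpa using this.mono_left nhdsWithin_le_nhds
      have hev : ∀ᶠ η in 𝓝[<] L, |d.eval η| ≤ C * (L - η) ^ (n + 1) := by
        filter_upwards [Ioo_mem_nhdsLT_of_mem (by constructor <;> linarith : L ∈ Set.Ioc (L - ε) L)]
          with η hη using hb η hη
      have : |d.eval L| ≤ 0 := le_of_tendsto_of_tendsto h1 h2 hev
      have := abs_nonneg (d.eval L)
      exact abs_eq_zero.mp (le_antisymm ‹|d.eval L| ≤ 0› this)
    obtain ⟨e, he⟩ := (dvd_iff_isRoot.mpr hroot : (X - Polynomial.C L) ∣ d)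
    have hbe : ∀ η ∈ Set.Ioo (L - ε) L, |e.eval η| ≤ C * (L - η) ^ n := by
      intro η hη
      have hpos : 0 < L - η := by linarith [hη.2]
      have hd : |d.eval η| = (L - η) * |e.eval η| := by
        rw [he, Polynomial.eval_mul, abs_mul]
        congr 1
        rw [Polynomial.eval_sub, Polynomial.eval_X, Polynomial.eval_C, abs_sub_comm,
          abs_of_pos hpos]
      have := hb η hη
      rw [hd] at this
      have : (L - η) * |e.eval η| ≤ (L - η) * (C * (L - η) ^ n) := by
        calc (L - η) * |e.eval η| ≤ C * (L - η) ^ (n + 1) := this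
          _ = (L - η) * (C * (L - η) ^ n) := by ring
      exact le_of_mul_le_mul_left this hpos
    obtain ⟨f, hf⟩ := ih e C L ε hε hbe
    exact ⟨f, by rw [he, hf]; ring⟩

theorem stmt_2 (k : ℕ) (s : Polynomial ℝ) (hs : s.natDegree ≤ k) (L : ℝ) (hL : 0 < L)
    (h : ∃ ε > 0, ∀ η ∈ Set.Ioo (L - ε) L, |s.eval η * η + 1| ≤ (1 - η / L) ^ (k + 1)) :
    ∀ η : ℝ, s.eval η * η + 1 = (1 - η / L) ^ (k + 1) := by
  obtain ⟨ε, hε, hb⟩ := h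
  set q : Polynomial ℝ := Polynomial.C (1 / L ^ (k + 1)) * (Polynomial.C L - X) ^ (k + 1) with hq
  have hqe : ∀ η : ℝ, q.eval η = (1 - η / L) ^ (k + 1) := by
    intro η
    have : (1 : ℝ) - η / L = (L - η) / L := by field_simp
    rw [hq]
    simp [this, div_pow]
    rw [div_eq_mul_inv]
    ring
  set d : Polynomial ℝ := s * X + 1 - q with hd
  have hde : ∀ η : ℝ, d.eval η = s.eval η * η + 1 - (1 - η / L) ^ (k + 1) := by
    intro η; simp [hd, hqe η]
  have hbd : ∀ η ∈ Set.Ioo (L - ε) L, |d.eval η| ≤ (2 / L ^ (k + 1)) * (L - η) ^ (k + 1) := by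
    intro η hη
    have hpos : 0 < 1 - η / L := by
      rw [sub_pos, div_lt_one hL]; exact hη.2
    have h1 : |d.eval η| ≤ |s.eval η * η + 1| + |(1 - η / L) ^ (k + 1)| := by
      rw [hde η]; exact abs_sub _ _
    have h2 : |(1 - η / L) ^ (k + 1)| = (1 - η / L) ^ (k + 1) :=
      abs_of_pos (pow_pos hpos _)
    have h3 : |d.eval η| ≤ 2 * (1 - η / L) ^ (k + 1) := by
      have := hb η hη
      linarith [h1, h2]
    have h4 : (1 - η / L) ^ (k + 1) = (L - η) ^ (k + 1) / L ^ (k + 1) := by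
      rw [← div_pow]; congr 1; field_simp
    rw [h4] at h3
    calc |d.eval η| ≤ 2 * ((L - η) ^ (k + 1) / L ^ (k + 1)) := h3
      _ = (2 / L ^ (k + 1)) * (L - η) ^ (k + 1) := by ring
  obtain ⟨e, he⟩ := key (k + 1) d _ L ε hε hbd
  -- degree argument
  have hdd : d.natDegree ≤ k + 1 := by
    rw [hd]
    refine le_trans (Polynomial.natDegree_sub_le _ _) ?_
    apply max_le
    · refine le_trans (Polynomial.natDegree_add_le _ _) ?_
      apply max_le
      · exact le_trans (Polynomial.natDegree_mul_le (p := s) (q := X)) (by simpa using add_le_add hs (Polynomial.natDegree_X_le (R := ℝ)))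
      · simp
    · refine le_trans (Polynomial.natDegree_mul_le) ?_
      have h1 : (Polynomial.C L - X).natDegree ≤ 1 :=
        le_trans (Polynomial.natDegree_sub_le _ _) (by simp)
      have h2 : ((Polynomial.C L - X) ^ (k + 1)).natDegree ≤ k + 1 := by
        rw [Polynomial.natDegree_pow]
        calc (k + 1) * (Polynomial.C L - X).natDegree ≤ (k + 1) * 1 :=
            Nat.mul_le_mul_left _ h1
          _ = k + 1 := by ring
      simp only [Polynomial.natDegree_C, zero_add]
      omega
  have hzero : d = 0 := by
    by_contra hne
    have hene : e ≠ 0 := by rintro rfl; rw [mul_zero] at he; exact hne he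
    have hX : ((X : Polynomial ℝ) - Polynomial.C L) ^ (k + 1) ≠ 0 :=
      pow_ne_zero _ (Polynomial.X_sub_C_ne_zero L)
    have : d.natDegree = (k + 1) + e.natDegree := by
      rw [he, Polynomial.natDegree_mul hX hene, Polynomial.natDegree_pow,
        Polynomial.natDegree_X_sub_C, mul_one]
    have heconst : e.natDegree = 0 := by omega
    -- e is constant c; evaluate d at 0
    have hd0 : d.eval 0 = 0 := by rw [hde 0]; simp
    have : ((-L) ^ (k + 1)) * e.eval 0 = 0 := by
      have := hd0
      rw [he] at this
      simpa using this
    have hL0 : ((-L : ℝ)) ^ (k + 1) ≠ 0 := pow_ne_zero _ (by linarith)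
    have he0 : e.eval 0 = 0 := by
      rcases mul_eq_zero.mp this with h | h
      · exact absurd h hL0
      · exact h
    have : e = Polynomial.C (e.coeff 0) := Polynomial.eq_C_of_natDegree_eq_zero heconst
    rw [this] at he0
    simp at he0
    apply hne
    rw [he, this, he0]
    simp
  intro η
  have := hde η
  rw [hzero] at this
  simp at this
  linarith
end

section
/- Let s be a real polynomial of degree at most k and L > 0. Then either s(η)·η + 1 = (1 - η/L)^(k+1) identically, or for every ε > 0 there exists η in (L - ε, L) with |s(η)·η + 1| > (1 - η/L)^(k+1). -/
open Polynomial Filter Set Topology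

theorem stmt_3 (k : ℕ) (s : Polynomial ℝ) (hs : s.natDegree ≤ k) (L : ℝ) (hL : 0 < L) :
    (∀ η : ℝ, s.eval η * η + 1 = (1 - η / L) ^ (k + 1)) ∨
      (∀ ε > 0, ∃ η ∈ Set.Ioo (L - ε) L, |s.eval η * η + 1| > (1 - η / L) ^ (k + 1)) := by
  set F : Polynomial ℝ := X * s + 1 with hFdef
  have hFeval : ∀ η : ℝ, F.eval η = s.eval η * η + 1 := by
    intro η; simp [hFdef]; ring
  have hF0 : F ≠ 0 := by
    intro h
    have := hFeval 0
    rw [h] at this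
    simp at this
  have hFdeg : F.natDegree ≤ k + 1 := by
    refine (natDegree_add_le _ _).trans ?_
    simp only [natDegree_one, max_le_iff]
    constructor
    · exact (natDegree_mul_le).trans (by simpa using Nat.add_le_add_left hs 1 |>.trans (by omega))
    · omega
  by_cases H : ∀ η : ℝ, s.eval η * η + 1 = (1 - η / L) ^ (k + 1)
  · exact Or.inl H
  · right
    intro ε hε
    by_contra hcon
    push_neg at hcon
    -- hcon : ∀ η ∈ Ioo (L-ε) L, |s.eval η * η + 1| ≤ (1 - η/L)^(k+1)
    apply H
    -- Step 1: root multiplicity of L in F is ≥ k+1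
    set m := rootMultiplicity L F with hm
    set Q := F /ₘ (X - C L) ^ m with hQ
    have hfac : (X - C L) ^ m * Q = F := pow_mul_divByMonic_rootMultiplicity_eq F L
    have hQL : Q.eval L ≠ 0 := eval_divByMonic_pow_rootMultiplicity_ne_zero L hF0
    have hmk : k + 1 ≤ m := by
      by_contra hmk
      push_neg at hmk
      have key : ∀ η ∈ Set.Ioo (L - ε) L, |Q.eval η| ≤ (L - η) ^ (k + 1 - m) / L ^ (k + 1) := by
        intro η hη
        have hηL : η < L := hη.2
        have hpos : (0:ℝ) < L - η := by linarith
        have h1 : (1 : ℝ) - η / L = (L - η) / L := by field_simp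
        have h2 := hcon η hη
        rw [h1, div_pow] at h2
        have h3 : |F.eval η| = (L - η) ^ m * |Q.eval η| := by
          rw [← hfac]
          simp only [eval_mul, eval_pow, eval_sub, eval_X, eval_C, abs_mul, abs_pow]
          rw [abs_of_neg (by linarith : η - L < 0)]
          ring_nf
        rw [← hFeval η, h3] at h2
        have h4 : (L - η) ^ (k + 1) = (L - η) ^ m * (L - η) ^ (k + 1 - m) := by
          rw [← pow_add]; congr 1; omega
        rw [h4, mul_div_assoc] at h2
        exact le_of_mul_le_mul_left h2 (pow_pos hpos m)
      -- take the limit η → L within Ioo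
      have hne : (𝓝[Set.Ioo (L - ε) L] L).NeBot := by
        apply mem_closure_iff_nhdsWithin_neBot.mp
        rw [closure_Ioo (by linarith : L - ε ≠ L)]
        exact ⟨by linarith, le_refl L⟩
      have t1 : Tendsto (fun η => |Q.eval η|) (𝓝[Set.Ioo (L - ε) L] L) (𝓝 |Q.eval L|) :=
        ((Q.continuous.abs).tendsto L).mono_left nhdsWithin_le_nhds
      have t2 : Tendsto (fun η : ℝ => (L - η) ^ (k + 1 - m) / L ^ (k + 1))
          (𝓝[Set.Ioo (L - ε) L] L) (𝓝 0) := by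
        have : Tendsto (fun η : ℝ => (L - η) ^ (k + 1 - m) / L ^ (k + 1)) (𝓝 L)
            (𝓝 ((L - L) ^ (k + 1 - m) / L ^ (k + 1))) := by
          apply Tendsto.div_const
          exact ((continuous_const.sub continuous_id).pow _).tendsto L
        rw [sub_self, zero_pow (by omega : k + 1 - m ≠ 0), zero_div] at this
        exact this.mono_left nhdsWithin_le_nhds
      have hle : |Q.eval L| ≤ 0 := by
        refine le_of_tendsto_of_tendsto t1 t2 ?_
        filter_upwards [self_mem_nhdsWithin] with η hη using key η hη
      exact hQL (abs_nonpos_iff.mp hle)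
    -- Step 2: F = c * (X - C L)^(k+1)
    have hdvd : (X - C L) ^ (k + 1) ∣ F :=
      dvd_trans (pow_dvd_pow _ hmk) (pow_rootMultiplicity_dvd F L)
    obtain ⟨R, hR⟩ := hdvd
    have hR0 : R ≠ 0 := by
      intro h; rw [h, mul_zero] at hR; exact hF0 hR
    have hRdeg : R.natDegree = 0 := by
      have hXL : (X - C L : Polynomial ℝ) ≠ 0 := X_sub_C_ne_zero L
      have := natDegree_mul (pow_ne_zero (k+1) hXL) hR0
      rw [← hR] at this
      rw [natDegree_pow, natDegree_X_sub_C] at this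
      omega
    obtain ⟨c, hc⟩ := natDegree_eq_zero.mp hRdeg
    have hceval : ∀ η : ℝ, F.eval η = (η - L) ^ (k + 1) * c := by
      intro η
      rw [hR, ← hc]
      simp [eval_pow]
    have hc1 : (-L) ^ (k + 1) * c = 1 := by
      have := hceval 0
      rw [hFeval 0] at this
      simpa using this.symm
    intro η
    rw [← hFeval η, hceval η]
    have hLne : L ≠ 0 := ne_of_gt hL
    have hcval : c = ((-L) ^ (k + 1))⁻¹ := by
      have hne : (-L) ^ (k + 1) ≠ 0 := pow_ne_zero _ (neg_ne_zero.mpr hLne)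
      field_simp
      linear_combination hc1
    rw [hcval, ← div_eq_mul_inv, ← div_pow]
    congr 1
    rw [div_eq_iff (neg_ne_zero.mpr hLne)]
    field_simp
    ring
end

section
/- For every real polynomial s of degree at most k and every 0 < μ < L, there exists η ∈ [μ, L] such that |s(η)·η + 1| ≥ T_{k+1}((κ+1)/(κ−1))^{-1}, where κ = L/μ and T_{k+1} is the Chebyshev polynomial of the first kind of degree k+1. -/
open Polynomial Finset Real

lemma chebT_natDegree_le (n : ℕ) : (Polynomial.Chebyshev.T ℝ (n : ℤ)).natDegree ≤ n := by
  suffices h : ∀ m : ℕ, (Polynomial.Chebyshev.T ℝ (m : ℤ)).natDegree ≤ m ∧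
      (Polynomial.Chebyshev.T ℝ ((m : ℤ) + 1)).natDegree ≤ m + 1 from (h n).1
  intro m
  induction m with
  | zero => simp [Polynomial.Chebyshev.T_zero, Polynomial.Chebyshev.T_one]
  | succ m ih =>
    refine ⟨by exact_mod_cast ih.2, ?_⟩
    rw [show ((m + 1 : ℕ) : ℤ) + 1 = (m : ℤ) + 2 by push_cast; ring,
      Polynomial.Chebyshev.T_add_two]
    refine le_trans (Polynomial.natDegree_sub_le _ _) ?_
    have h1 : (2 * X * Polynomial.Chebyshev.T ℝ ((m : ℤ) + 1)).natDegree ≤ m + 2 := by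
      refine le_trans (Polynomial.natDegree_mul_le) ?_
      have h0 : (2 * X : ℝ[X]).natDegree ≤ 1 := by
        refine le_trans (Polynomial.natDegree_mul_le) ?_
        simp
      have := ih.2
      omega
    have h3 := ih.1
    simp only [sup_le_iff]
    exact ⟨by omega, by omega⟩

theorem stmt_11 (k : ℕ) (s : Polynomial ℝ) (hs : s.natDegree ≤ k)
    (μ L : ℝ) (hμ : 0 < μ) (hμL : μ < L) :
    ∃ η ∈ Set.Icc μ L,
      |s.eval η * η + 1| ≥
        ((Polynomial.Chebyshev.T ℝ (k + 1)).eval ((L / μ + 1) / (L / μ - 1)))⁻¹ := by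
  have hπ := Real.pi_pos
  have hLμ : (0:ℝ) < L - μ := by linarith
  have hk1 : (0:ℝ) < (k:ℝ) + 1 := by positivity
  set θ : ℕ → ℝ := fun j => j * Real.pi / ((k:ℝ)+1) with hθdef
  set v : ℕ → ℝ := fun j => (L+μ)/2 - (L-μ)/2 * Real.cos (θ j) with hvdef
  set S : Finset ℕ := Finset.range (k+2) with hSdef
  -- θ monotone and in [0, π]
  have hθmem : ∀ j ∈ S, θ j ∈ Set.Icc 0 Real.pi := by
    intro j hj
    rw [hSdef, Finset.mem_range] at hj
    constructor
    · positivity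
    · rw [hθdef]
      rw [div_le_iff₀ hk1]
      have : (j:ℝ) ≤ (k:ℝ) + 1 := by exact_mod_cast Nat.lt_succ_iff.mp (by omega)
      nlinarith
  -- v is strictly monotone on S
  have hvlt : ∀ i ∈ S, ∀ j ∈ S, i < j → v i < v j := by
    intro i hi j hj hij
    have hθlt : θ i < θ j := by
      rw [hθdef]
      simp only [hθdef]
      gcongr
    have hcos : Real.cos (θ j) < Real.cos (θ i) :=
      Real.strictAntiOn_cos (hθmem i hi) (hθmem j hj) hθlt
    have : (L-μ)/2 * Real.cos (θ j) < (L-μ)/2 * Real.cos (θ i) := by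
      apply mul_lt_mul_of_pos_left hcos; linarith
    simp only [hvdef]; linarith
  have hinj : Set.InjOn v S := by
    intro i hi j hj hij
    by_contra hne
    rcases lt_or_gt_of_ne hne with h | h
    · exact absurd hij (ne_of_lt (hvlt i hi j hj h))
    · exact absurd hij.symm (ne_of_lt (hvlt j hj i hi h))
  -- v j ∈ [μ, L]
  have hmem : ∀ j ∈ S, v j ∈ Set.Icc μ L := by
    intro j hj
    have h1 := Real.neg_one_le_cos (θ j)
    have h2 := Real.cos_le_one (θ j)
    constructor <;> (simp only [hvdef]; nlinarith)
  have hvpos : ∀ j ∈ S, 0 < v j := fun j hj => lt_of_lt_of_le hμ (hmem j hj).1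
  -- the basis values at 0
  set b : ℕ → ℝ := fun j => (Lagrange.basis S v j).eval 0 with hbdef
  have hb : ∀ j, b j = ∏ i ∈ S.erase j, ((v j - v i)⁻¹ * (0 - v i)) := by
    intro j
    simp [hbdef, Lagrange.basis, Lagrange.basisDivisor, Polynomial.eval_prod]
  -- sign of b j
  have hsign : ∀ j ∈ S, |b j| = (-1)^j * b j := by
    intro j hj
    rw [hSdef, Finset.mem_range] at hj
    have hjS : j ∈ S := by simp [hSdef]; omega
    rw [hb, Finset.abs_prod]
    have hterm : ∀ i ∈ S.erase j, |(v j - v i)⁻¹ * (0 - v i)| =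
        (if i < j then (-1:ℝ) else 1) * ((v j - v i)⁻¹ * (0 - v i)) := by
      intro i hi
      have hiS : i ∈ S := Finset.mem_of_mem_erase hi
      have hine : i ≠ j := (Finset.mem_erase.mp hi).1
      have hvi := hvpos i hiS
      by_cases hlt : i < j
      · have h1 : 0 < v j - v i := sub_pos.mpr (hvlt i hiS j hjS hlt)
        have : (v j - v i)⁻¹ * (0 - v i) < 0 :=
          mul_neg_of_pos_of_neg (inv_pos.mpr h1) (by linarith)
        rw [if_pos hlt, abs_of_neg this]; ring
      · have hgt : j < i := by omega
        have h1 : v j - v i < 0 := sub_neg.mpr (hvlt j hjS i hiS hgt)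
        have : 0 < (v j - v i)⁻¹ * (0 - v i) :=
          mul_pos_of_neg_of_neg (inv_neg''.mpr h1) (by linarith)
        rw [if_neg hlt, abs_of_pos this, one_mul]
    rw [Finset.prod_congr rfl hterm, Finset.prod_mul_distrib, ← hb]
    congr 1
    rw [Finset.prod_ite, Finset.prod_const, Finset.prod_const, one_pow, mul_one]
    congr 1
    have : (S.erase j).filter (· < j) = Finset.range j := by
      ext i
      simp only [Finset.mem_filter, Finset.mem_erase, Finset.mem_range, hSdef]
      omega
    rw [this, Finset.card_range]
  -- interpolation of p
  have hcard : S.card = k + 2 := by simp [hSdef]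
  have hp_eq : (1:ℝ) = ∑ j ∈ S, (s.eval (v j) * v j + 1) * b j := by
    have hdegp : (s * Polynomial.X + 1 : ℝ[X]).degree < (S.card : WithBot ℕ) := by
      apply lt_of_le_of_lt (Polynomial.degree_le_natDegree)
      rw [Nat.cast_lt, hcard]
      have h1 : (s * Polynomial.X + 1 : ℝ[X]).natDegree ≤
          max (s * Polynomial.X : ℝ[X]).natDegree (1 : ℝ[X]).natDegree :=
        Polynomial.natDegree_add_le _ _
      have h2 : (s * Polynomial.X : ℝ[X]).natDegree ≤ s.natDegree + 1 := by
        refine le_trans Polynomial.natDegree_mul_le ?_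
        simp
      simp only [Polynomial.natDegree_one] at h1
      omega
    have heq := Lagrange.eq_interpolate (v := v) hinj hdegp
    have h0 := congrArg (Polynomial.eval 0) heq
    simp only [Lagrange.interpolate_apply, Polynomial.eval_finset_sum, Polynomial.eval_mul,
      Polynomial.eval_C, Polynomial.eval_add, Polynomial.eval_X, Polynomial.eval_one,
      mul_zero, zero_add] at h0
    simpa [hbdef] using h0
  -- interpolation of Q
  set x₀ : ℝ := (L + μ)/(L - μ) with hx0def
  set Tv : ℝ := (Polynomial.Chebyshev.T ℝ ((k:ℤ) + 1)).eval x₀ with hTvdef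
  have hQ_eq : Tv = ∑ j ∈ S, (-1)^j * b j := by
    set a : ℝ[X] := Polynomial.C ((L+μ)/(L-μ)) - Polynomial.C (2/(L-μ)) * Polynomial.X with hadef
    set Q : ℝ[X] := (Polynomial.Chebyshev.T ℝ ((k:ℤ)+1)).comp a with hQdef
    have hT1 : ((k:ℤ) + 1) = ((k+1 : ℕ) : ℤ) := by push_cast; ring
    have hdega : a.natDegree ≤ 1 := by
      refine le_trans (Polynomial.natDegree_sub_le _ _) ?_
      simp only [Polynomial.natDegree_C, max_le_iff]
      refine ⟨Nat.zero_le _, ?_⟩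
      refine le_trans (Polynomial.natDegree_C_mul_le _ _) ?_
      simp
    have hdegQ : Q.degree < (S.card : WithBot ℕ) := by
      apply lt_of_le_of_lt (Polynomial.degree_le_natDegree)
      rw [Nat.cast_lt, hcard]
      have h1 : Q.natDegree ≤ (Polynomial.Chebyshev.T ℝ ((k:ℤ)+1)).natDegree * a.natDegree :=
        Polynomial.natDegree_comp_le
      have h2 : (Polynomial.Chebyshev.T ℝ ((k:ℤ)+1)).natDegree ≤ k + 1 := by
        rw [hT1]; exact chebT_natDegree_le (k+1)
      nlinarith
    -- values of Q at the nodes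
    have hQval : ∀ j ∈ S, Q.eval (v j) = (-1)^j := by
      intro j hj
      have hcosval : a.eval (v j) = Real.cos (θ j) := by
        simp only [hadef, Polynomial.eval_sub, Polynomial.eval_mul, Polynomial.eval_C,
          Polynomial.eval_X, hvdef]
        field_simp
        ring
      rw [hQdef, Polynomial.eval_comp, hcosval, Polynomial.Chebyshev.T_real_cos]
      have harg : ((k:ℤ) + 1 : ℝ) * θ j = (j:ℝ) * Real.pi := by
        push_cast
        simp only [hθdef]
        field_simp
      rw [show (((k:ℤ) + 1 : ℤ) : ℝ) * θ j = (j:ℝ) * Real.pi by push_cast; push_cast at harg; linarith]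
      have := Real.cos_nat_mul_pi_sub 0 j
      simpa using this
    have hQ0 : Q.eval 0 = Tv := by
      rw [hQdef, Polynomial.eval_comp]
      simp [hadef, hx0def, hTvdef]
    have heq := Lagrange.eq_interpolate (v := v) hinj hdegQ
    have h0 := congrArg (Polynomial.eval 0) heq
    rw [hQ0] at h0
    simp only [Lagrange.interpolate_apply, Polynomial.eval_finset_sum, Polynomial.eval_mul,
      Polynomial.eval_C] at h0
    rw [h0]
    refine Finset.sum_congr rfl fun j hj => ?_
    rw [hQval j hj, hbdef]
  have hTv : Tv = ∑ j ∈ S, |b j| := by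
    rw [hQ_eq]; exact Finset.sum_congr rfl fun j hj => (hsign j hj).symm
  -- Tv > 0
  have hb0 : b 0 ≠ 0 := by
    rw [hb]
    apply Finset.prod_ne_zero_iff.mpr
    intro i hi
    have hi' : i ∈ S := Finset.mem_of_mem_erase hi
    have h0S : (0:ℕ) ∈ S := by simp [hSdef]
    have hne : v 0 ≠ v i := fun h => (Finset.mem_erase.mp hi).1 (hinj hi' h0S h.symm)
    have := hvpos i hi'
    intro hcontra
    rcases mul_eq_zero.mp hcontra with h | h
    · exact hne (by rwa [inv_eq_zero, sub_eq_zero] at h)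
    · linarith [h]
  have hTvpos : 0 < Tv := by
    rw [hTv]
    have h0S : (0:ℕ) ∈ S := by simp [hSdef]
    calc (0:ℝ) < |b 0| := abs_pos.mpr hb0
    _ ≤ ∑ j ∈ S, |b j| := Finset.single_le_sum (f := fun j => |b j|) (fun j _ => abs_nonneg _) h0S
  -- pick the max
  obtain ⟨j₀, hj₀S, hj₀max⟩ := S.exists_max_image (fun j => |s.eval (v j) * v j + 1|)
    ⟨0, by simp [hSdef]⟩
  refine ⟨v j₀, hmem j₀ hj₀S, ?_⟩
  have hx0 : (L / μ + 1) / (L / μ - 1) = x₀ := by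
    rw [hx0def]
    have h1 : L / μ - 1 ≠ 0 := by
      have : 1 < L / μ := (one_lt_div hμ).mpr hμL
      linarith
    field_simp
  rw [hx0]
  have hchain : 1 ≤ |s.eval (v j₀) * v j₀ + 1| * Tv := by
    calc (1:ℝ) = |∑ j ∈ S, (s.eval (v j) * v j + 1) * b j| := by rw [← hp_eq]; simp
    _ ≤ ∑ j ∈ S, |(s.eval (v j) * v j + 1) * b j| := Finset.abs_sum_le_sum_abs _ _
    _ = ∑ j ∈ S, |s.eval (v j) * v j + 1| * |b j| := by
        exact Finset.sum_congr rfl fun j _ => abs_mul _ _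
    _ ≤ ∑ j ∈ S, |s.eval (v j₀) * v j₀ + 1| * |b j| := by
        apply Finset.sum_le_sum
        intro j hj
        exact mul_le_mul_of_nonneg_right (hj₀max j hj) (abs_nonneg _)
    _ = |s.eval (v j₀) * v j₀ + 1| * Tv := by rw [← Finset.mul_sum, ← hTv]
  have : Tv⁻¹ ≤ |s.eval (v j₀) * v j₀ + 1| := by
    rw [inv_eq_one_div, div_le_iff₀ hTvpos]
    linarith
  have hcast : (Polynomial.Chebyshev.T ℝ (↑k + 1)).eval x₀ = Tv := rfl
  rw [ge_iff_le, hcast]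
  exact this
end

section
/- Let s be a real polynomial of degree at most k and L > 0. Then there exists η ∈ (L/2, L) such that |s(η)·η + 1| ≥ (1 − η/L)^(k+1). -/
open Polynomial

theorem stmt_18 (k : ℕ) (s : Polynomial ℝ) (hs : s.natDegree ≤ k) (L : ℝ) (hL : 0 < L) :
    ∃ η ∈ Set.Ioo (L / 2) L, |s.eval η * η + 1| ≥ (1 - η / L) ^ (k + 1) := by
  set f : Polynomial ℝ := s * X + 1 with hf
  have hfeval : ∀ x : ℝ, f.eval x = s.eval x * x + 1 := by intro x; simp [hf]
  have hf0 : f ≠ 0 := by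
    intro h
    have h0 : f.eval 0 = 0 := by rw [h]; simp
    rw [hfeval] at h0; simp at h0
  have hfdeg : f.natDegree ≤ k + 1 := by
    calc f.natDegree ≤ max (s * X).natDegree (1 : ℝ[X]).natDegree := natDegree_add_le _ _
    _ ≤ k + 1 := by
        refine max_le ?_ (by simp)
        calc (s * X).natDegree ≤ s.natDegree + (X : ℝ[X]).natDegree := natDegree_mul_le
        _ ≤ k + 1 := by rw [natDegree_X]; omega
  set m := rootMultiplicity L f with hm
  have hrw : ∀ η : ℝ, 1 - η / L = (L - η) / L := by
    intro η; field_simp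
  by_cases hcase : k + 1 ≤ m
  · -- f is a multiple of (X - C L)^(k+1), hence equals (1 - X/L)^(k+1) up to normalization
    obtain ⟨q, hq⟩ : (X - C L) ^ (k + 1) ∣ f :=
      dvd_trans (pow_dvd_pow _ hcase) (pow_rootMultiplicity_dvd f L)
    have hq0 : q ≠ 0 := by rintro rfl; simp at hq; exact hf0 hq
    have hdq : q.natDegree = 0 := by
      have := hq ▸ hfdeg
      rw [natDegree_mul (pow_ne_zero _ (X_sub_C_ne_zero L)) hq0] at this
      have : (k + 1) * ((X : ℝ[X]) - C L).natDegree + q.natDegree ≤ k + 1 := by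
        rwa [natDegree_pow] at this
      rw [natDegree_X_sub_C] at this; omega
    obtain ⟨c, rfl⟩ := natDegree_eq_zero.mp hdq
    have hc : (-L) ^ (k + 1) * c = 1 := by
      have h0 : f.eval 0 = 1 := by rw [hfeval]; ring
      rw [hq] at h0; simpa using h0
    refine ⟨3 * L / 4, ⟨by linarith, by linarith⟩, ?_⟩
    have hev : f.eval (3 * L / 4) = (3 * L / 4 - L) ^ (k + 1) * c := by
      rw [hq]; simp
    rw [← hfeval, hev, hrw]
    have key : (3 * L / 4 - L) ^ (k + 1) * c = ((L - 3 * L / 4) / L) ^ (k + 1) := by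
      have h1 : (3 * L / 4 - L : ℝ) = (-L) * ((L - 3 * L / 4) / L) := by field_simp; ring
      rw [h1, mul_pow, mul_comm, ← mul_assoc, mul_comm c, hc, one_mul]
    have hnn : (0:ℝ) ≤ ((L - 3 * L / 4) / L) ^ (k + 1) :=
      pow_nonneg (div_nonneg (by linarith) hL.le) _
    rw [key, abs_of_nonneg hnn]
  · -- m ≤ k : order of vanishing is too small, |f| dominates near L
    push_neg at hcase
    set u := f /ₘ (X - C L) ^ m with hu
    have hfu : (X - C L) ^ m * u = f := pow_mul_divByMonic_rootMultiplicity_eq f L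
    have huL : u.eval L ≠ 0 := eval_divByMonic_pow_rootMultiplicity_ne_zero L hf0
    have huLpos : 0 < |u.eval L| := abs_pos.mpr huL
    -- continuity of u at L
    obtain ⟨δ, hδ, hball⟩ := Metric.continuousAt_iff.mp u.continuous.continuousAt
      (|u.eval L| / 2) (by linarith)
    set A : ℝ := |u.eval L| / 2 * L ^ (k + 1) with hA
    have hApos : 0 < A := by positivity
    set t : ℝ := min (δ / 2) (min (L / 4) (min 1 A)) with ht
    have htpos : 0 < t := by
      refine lt_min (by linarith) (lt_min (by linarith) (lt_min one_pos hApos))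
    have ht1 : t ≤ 1 := le_trans (min_le_right _ _) (le_trans (min_le_right _ _) (min_le_left _ _))
    have htA : t ≤ A := le_trans (min_le_right _ _) (le_trans (min_le_right _ _) (min_le_right _ _))
    have htL : t ≤ L / 4 := le_trans (min_le_right _ _) (min_le_left _ _)
    have htδ : t < δ := lt_of_le_of_lt (min_le_left _ _) (by linarith)
    refine ⟨L - t, ⟨by linarith, by linarith⟩, ?_⟩
    have hdist : dist (L - t) L < δ := by
      rw [Real.dist_eq, abs_of_nonpos (by linarith)]; simpa using htδ
    have huval : |u.eval L| / 2 ≤ |u.eval (L - t)| := by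
      have := hball hdist
      rw [Real.dist_eq] at this
      have h2 := abs_sub_abs_le_abs_sub (u.eval L) (u.eval (L - t))
      rw [abs_sub_comm] at h2
      linarith
    have hev : f.eval (L - t) = (-t) ^ m * u.eval (L - t) := by
      rw [← hfu]; simp
    rw [← hfeval, hev, hrw]
    have hLt : L - (L - t) = t := by ring
    rw [hLt, abs_mul, abs_pow, abs_neg, abs_of_pos htpos, div_pow]
    -- need t^(k+1) ≤ t^m * |u (L-t)| * L^(k+1)
    have hsplit : t ^ (k + 1) = t ^ m * t ^ (k + 1 - m) := by
      rw [← pow_add]; congr 1; omega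
    rw [ge_iff_le, div_le_iff₀ (by positivity), hsplit]
    have h1 : t ^ (k + 1 - m) ≤ t := by
      calc t ^ (k + 1 - m) ≤ t ^ 1 :=
        pow_le_pow_of_le_one (le_of_lt htpos) ht1 (by omega)
      _ = t := pow_one t
    calc t ^ m * t ^ (k + 1 - m) ≤ t ^ m * A := by
          refine mul_le_mul_of_nonneg_left (le_trans h1 htA) (by positivity)
    _ = t ^ m * (|u.eval L| / 2) * L ^ (k + 1) := by rw [hA]; ring
    _ ≤ t ^ m * |u.eval (L - t)| * L ^ (k + 1) := by
          refine mul_le_mul_of_nonneg_right (mul_le_mul_of_nonneg_left huval (by positivity)) (by positivity)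
end
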